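/- Let B be a totally sign-skew-symmetric n×n integer matrix satisfying the Assumption. If for some finite sequence w of mutation indices and some index i the i-th column g of the G-matrix G_w has all entries ≥ 0, then g = e_j for some index j, where e_j denotes the j-th standard basis vector of ℤ^n. -/

import Mathlib

open Matrix

/-- Mutation of an integer matrix at index `k`. -/
def mutB {n : ℕ} (B : Matrix (Fin n) (Fin n) ℤ) (k : Fin n) : Matrix (Fin n) (Fin n) ℤ :=
  Matrix.of fun i j =>
    if i = k ∨ j = k then -B i j
    else B i j + (B i k).sign * max (B i k * B k j) 0

/-- Sign-skew-symmetric matrix. -/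
def SignSkew {n : ℕ} (B : Matrix (Fin n) (Fin n) ℤ) : Prop :=
  ∀ i j, B i j * B j i ≤ 0 ∧ (B i j * B j i = 0 → B i j = 0 ∧ B j i = 0)

/-- Entrywise positive part `[A]₊`. -/
def matPos {n : ℕ} (A : Matrix (Fin n) (Fin n) ℤ) : Matrix (Fin n) (Fin n) ℤ :=
  Matrix.of fun i j => max (A i j) 0

/-- `A^{k·}`: agrees with `A` in row `k`, zero elsewhere. -/
def rowSel {n : ℕ} (A : Matrix (Fin n) (Fin n) ℤ) (k : Fin n) : Matrix (Fin n) (Fin n) ℤ :=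
  Matrix.of fun i j => if i = k then A i j else 0

/-- `A^{·k}`: agrees with `A` in column `k`, zero elsewhere. -/
def colSel {n : ℕ} (A : Matrix (Fin n) (Fin n) ℤ) (k : Fin n) : Matrix (Fin n) (Fin n) ℤ :=
  Matrix.of fun i j => if j = k then A i j else 0

/-- `J_k`: identity matrix with the `(k,k)` entry replaced by `-1`. -/
def Jmat (n : ℕ) (k : Fin n) : Matrix (Fin n) (Fin n) ℤ :=
  Matrix.of fun i j => if i = j then (if i = k then -1 else 1) else 0

/-- One mutation step on a triple `(B_w, C_w, G_w)`, with fixed initial matrix `B0`: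
`B_{w·k} = μ_k(B_w)`, `C_{w·k} = C_w (J_k + [B_w]₊^{k·}) + [-C_w]₊^{·k} B_w`,
`G_{w·k} = G_w (J_k + [-B_w]₊^{·k}) - B0 [-C_w]₊^{·k}`. -/
def BCGstep {n : ℕ} (B0 : Matrix (Fin n) (Fin n) ℤ)
    (s : Matrix (Fin n) (Fin n) ℤ × Matrix (Fin n) (Fin n) ℤ × Matrix (Fin n) (Fin n) ℤ)
    (k : Fin n) :
    Matrix (Fin n) (Fin n) ℤ × Matrix (Fin n) (Fin n) ℤ × Matrix (Fin n) (Fin n) ℤ :=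
  (mutB s.1 k,
   s.2.1 * (Jmat n k + rowSel (matPos s.1) k) + colSel (matPos (-s.2.1)) k * s.1,
   s.2.2 * (Jmat n k + colSel (matPos (-s.1)) k) - B0 * colSel (matPos (-s.2.1)) k)

/-- The triple `(B_w, C_w, G_w)` associated to a mutation sequence `w`
(entries of `w` are applied from left to right). -/
def BCG {n : ℕ} (B : Matrix (Fin n) (Fin n) ℤ) (w : List (Fin n)) :
    Matrix (Fin n) (Fin n) ℤ × Matrix (Fin n) (Fin n) ℤ × Matrix (Fin n) (Fin n) ℤ :=
  w.foldl (BCGstep B) (B, 1, 1)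

/-- The exchange matrix `B_w` of `B` at the sequence `w`. -/
def Bmat {n : ℕ} (B : Matrix (Fin n) (Fin n) ℤ) (w : List (Fin n)) :
    Matrix (Fin n) (Fin n) ℤ := (BCG B w).1

/-- The `C`-matrix `C_w^B`. -/
def Cmat {n : ℕ} (B : Matrix (Fin n) (Fin n) ℤ) (w : List (Fin n)) :
    Matrix (Fin n) (Fin n) ℤ := (BCG B w).2.1

/-- The `G`-matrix `G_w^B`. -/
def Gmat {n : ℕ} (B : Matrix (Fin n) (Fin n) ℤ) (w : List (Fin n)) :
    Matrix (Fin n) (Fin n) ℤ := (BCG B w).2.2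

/-- Totally sign-skew-symmetric: every matrix obtained from `B` by a finite sequence of
mutations is sign-skew-symmetric. -/
def TotSSS {n : ℕ} (B : Matrix (Fin n) (Fin n) ℤ) : Prop :=
  ∀ w : List (Fin n), SignSkew (Bmat B w)

/-- The `j`-th column of `A` is sign-coherent with sign `ε`. -/
def ColHasSign {n : ℕ} (A : Matrix (Fin n) (Fin n) ℤ) (j : Fin n) (ε : ℤ) : Prop :=
  (∃ i, A i j ≠ 0) ∧ ((ε = 1 ∧ ∀ i, 0 ≤ A i j) ∨ (ε = -1 ∧ ∀ i, A i j ≤ 0))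

/-- The `j`-th column of `A` is sign-coherent. -/
def ColSignCoherent {n : ℕ} (A : Matrix (Fin n) (Fin n) ℤ) (j : Fin n) : Prop :=
  ∃ ε : ℤ, ColHasSign A j ε

/-- The `i`-th row of `A` is sign-coherent with sign `ε`. -/
def RowHasSign {n : ℕ} (A : Matrix (Fin n) (Fin n) ℤ) (i : Fin n) (ε : ℤ) : Prop :=
  (∃ j, A i j ≠ 0) ∧ ((ε = 1 ∧ ∀ j, 0 ≤ A i j) ∨ (ε = -1 ∧ ∀ j, A i j ≤ 0))

/-- The **Assumption**: for every matrix `B₀` obtained from `B` or `-B` by a finite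
sequence of mutations, every sequence `w` and every index `k`, the `k`-th columns of
`C_w^{B₀}` and `C_w^{-B₀ᵀ}` are both sign-coherent with the same sign. -/
def TheAssumption {n : ℕ} (B : Matrix (Fin n) (Fin n) ℤ) : Prop :=
  ∀ B0 : Matrix (Fin n) (Fin n) ℤ,
    ((∃ v : List (Fin n), B0 = Bmat B v) ∨ (∃ v : List (Fin n), B0 = Bmat (-B) v)) →
    ∀ (w : List (Fin n)) (k : Fin n),
      ∃ ε : ℤ, ColHasSign (Cmat B0 w) k ε ∧ ColHasSign (Cmat (-B0ᵀ) w) k ε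

/-!
Once the sign `ε` of the `k`-th column of `C_w` is known, the recursions simplify to
`C_{w·k} = C_w F` and (given `B C_w = G_w B_w`) `G_{w·k} = G_w E`, where
`E = Emat (ε • B_w) k = J_k + [-εB_w]₊^{·k}` and `F = Fmat (ε • B_w) k = J_k + [εB_w]₊^{k·}`. Since
`E μ_k(B_w) = B_w F`, induction gives `B C_w = G_w B_w`. The same `ε` is the sign of the `k`-th
column of `C_w^{-Bᵀ}`, whose `F`-matrix is `Eᵀ`, and `E² = 1`; so induction also gives the
duality `G_wᵀ C_w^{-Bᵀ} = 1`.

Now let `g = G_w e_i ≥ 0` and `C = C_w^{-Bᵀ}`. For `j ≠ i` the sign-coherent column `C e_j` is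
orthogonal to `g`, so every row of `C` indexed by the support of `g` is a multiple of `e_iᵀ`.
Since `G Cᵀ = 1`, two such rows `l ≠ m` would give `g_l C_{mi} = 0` and `g_m C_{mi} = 1`; hence
the support is a single `l`, and `g_l C_{li} = 1` with `g_l ≥ 0` forces `g = e_l`.
-/

lemma sign_mul_max_mul_comm (p q : ℤ) : p.sign * max (p * q) 0 = q.sign * max (q * p) 0 := by
  rw [mul_comm q p]
  rcases lt_trichotomy p 0 with hp | hp | hp <;> rcases lt_trichotomy q 0 with hq | hq | hq <;>
    simp [Int.sign_eq_neg_one_of_neg, Int.sign_eq_one_of_pos, mul_nonpos_iff, hp.le, hq.le, *]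

lemma sign_mul_max_mul_sub_max_neg_mul (b c : ℤ) :
    b.sign * max (b * c) 0 - max (-b) 0 * c = b * max c 0 := by
  rcases lt_trichotomy b 0 with hb | hb | hb <;> rcases le_total c 0 with hc | hc <;>
    simp [Int.sign_eq_neg_one_of_neg, Int.sign_eq_one_of_pos, mul_nonpos_iff, mul_nonneg_iff,
      hb.le, *]

section Selection

variable {n : ℕ} (A X : Matrix (Fin n) (Fin n) ℤ) (k : Fin n)

lemma mul_rowSel_apply (i j : Fin n) : (X * rowSel A k) i j = X i k * A k j := by
  simp [Matrix.mul_apply, rowSel]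

lemma colSel_mul_apply (i j : Fin n) : (colSel A k * X) i j = A i k * X k j := by
  simp [Matrix.mul_apply, colSel]

lemma Jmat_mul_apply (i j : Fin n) : (Jmat n k * X) i j = if i = k then -X i j else X i j := by
  simp [Matrix.mul_apply, Jmat]

lemma mul_Jmat_apply (i j : Fin n) : (X * Jmat n k) i j = if j = k then -X i j else X i j := by
  simp [Matrix.mul_apply, Jmat]

lemma colSel_mul : colSel A k * X = A * rowSel X k := by
  ext i j
  rw [colSel_mul_apply, mul_rowSel_apply]

lemma mul_colSel : X * colSel A k = colSel (X * A) k := by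
  ext i j
  by_cases h : j = k <;> simp [Matrix.mul_apply, colSel, h]

lemma Jmat_transpose : (Jmat n k)ᵀ = Jmat n k := by
  ext i j
  by_cases h : i = j <;> simp [Jmat, h, eq_comm]

lemma colSel_transpose : (colSel A k)ᵀ = rowSel Aᵀ k := by
  ext i j
  simp [colSel, rowSel]

lemma matPos_transpose : (matPos A)ᵀ = matPos Aᵀ := by
  ext i j
  simp [matPos]

lemma colSel_matPos_neg_add : colSel (matPos (-A)) k + colSel A k = colSel (matPos A) k := by
  ext i j
  by_cases h : j = k <;> simp [colSel, matPos, h]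
  omega

lemma rowSel_matPos_neg_add : rowSel (matPos (-A)) k + rowSel A k = rowSel (matPos A) k := by
  ext i j
  by_cases h : i = k <;> simp [rowSel, matPos, h]
  omega

lemma colSel_matPos_neg_of_nonneg (h : ∀ i, 0 ≤ A i k) : colSel (matPos (-A)) k = 0 := by
  ext i j
  by_cases hj : j = k <;> simp [colSel, matPos, hj, h i]

lemma colSel_matPos_neg_of_nonpos (h : ∀ i, A i k ≤ 0) : colSel (matPos (-A)) k = -colSel A k := by
  ext i j
  by_cases hj : j = k <;> simp [colSel, matPos, hj, h i]

lemma Jmat_mul_self : Jmat n k * Jmat n k = 1 := by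
  ext i j
  rw [Jmat_mul_apply]
  by_cases h : i = j <;> by_cases h' : i = k <;> simp_all [Jmat, Matrix.one_apply, eq_comm]

lemma Jmat_add_colSel_mul_self (hA : A k k = 0) :
    (Jmat n k + colSel A k) * (Jmat n k + colSel A k) = 1 := by
  have hJS : Jmat n k * colSel A k = colSel A k := by
    ext i j
    rw [Jmat_mul_apply]
    by_cases h : i = k <;> by_cases h' : j = k <;> simp [colSel, h, h', hA]
  have hSJ : colSel A k * Jmat n k = -colSel A k := by
    ext i j
    rw [mul_Jmat_apply]
    by_cases h : j = k <;> simp [colSel, h]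
  have hSS : colSel A k * colSel A k = 0 := by
    ext i j
    rw [colSel_mul_apply]
    by_cases h : j = k <;> simp [colSel, h, hA]
  rw [add_mul, mul_add, mul_add, Jmat_mul_self, hJS, hSJ, hSS]
  abel

end Selection

lemma SignSkew.apply_self {n : ℕ} {B : Matrix (Fin n) (Fin n) ℤ} (h : SignSkew B) (k : Fin n) :
    B k k = 0 :=
  mul_self_eq_zero.mp (le_antisymm (h k k).1 (mul_self_nonneg _))

section Mutation

variable {n : ℕ} (B : Matrix (Fin n) (Fin n) ℤ) (k : Fin n)

lemma mutB_neg : mutB (-B) k = -mutB B k := by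
  ext i j
  by_cases h : i = k ∨ j = k <;> simp [mutB, h]
  ring

lemma mutB_neg_transpose : mutB (-Bᵀ) k = -(mutB B k)ᵀ := by
  ext i j
  by_cases h : i = k ∨ j = k
  · simp [mutB, h, or_comm]
  · have h' : ¬(j = k ∨ i = k) := by tauto
    simp only [mutB, Matrix.of_apply, Matrix.neg_apply, Matrix.transpose_apply, if_neg h, if_neg h',
      neg_mul_neg, Int.sign_neg]
    linear_combination -sign_mul_max_mul_comm (B k i) (B j k)

def Emat : Matrix (Fin n) (Fin n) ℤ := Jmat n k + colSel (matPos (-B)) k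

def Fmat : Matrix (Fin n) (Fin n) ℤ := Jmat n k + rowSel (matPos B) k

variable {B}

lemma Emat_mul_mutB (hkk : B k k = 0) : Emat B k * mutB B k = B * Fmat B k := by
  ext i j
  simp only [Emat, Fmat, add_mul, mul_add, Matrix.add_apply, Jmat_mul_apply, colSel_mul_apply,
    mul_Jmat_apply, mul_rowSel_apply]
  by_cases hi : i = k
  · by_cases hj : j = k <;> simp [mutB, matPos, hi, hj, hkk]
  by_cases hj : j = k
  · simp [mutB, matPos, hi, hj, hkk]
  simp only [mutB, matPos, Matrix.of_apply, Matrix.neg_apply, hi, hj, if_false, or_self,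
    true_or, if_true]
  linear_combination sign_mul_max_mul_sub_max_neg_mul (B i k) (B k j)

end Mutation

section Recursion

variable {n : ℕ} {B : Matrix (Fin n) (Fin n) ℤ} {w : List (Fin n)} {k : Fin n} {ε : ℤ}

lemma ColHasSign.eq_one_or_eq_neg_one {A : Matrix (Fin n) (Fin n) ℤ} (h : ColHasSign A k ε) :
    ε = 1 ∨ ε = -1 :=
  h.2.imp And.left And.left

lemma ColHasSign.nonneg_or_nonpos {A : Matrix (Fin n) (Fin n) ℤ} (h : ColHasSign A k ε) :
    (∀ i, 0 ≤ A i k) ∨ ∀ i, A i k ≤ 0 :=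
  h.2.imp And.right And.right

lemma Emat_smul_mul_mutB (hkk : B k k = 0) (hε : ε = 1 ∨ ε = -1) :
    Emat (ε • B) k * mutB B k = B * Fmat (ε • B) k := by
  rcases hε with rfl | rfl
  · simpa using Emat_mul_mutB k hkk
  · simpa [mutB_neg] using Emat_mul_mutB (B := -B) k (by simp [hkk])

lemma Emat_mul_self (hkk : B k k = 0) : Emat B k * Emat B k = 1 :=
  Jmat_add_colSel_mul_self _ k (by simp [matPos, hkk])

lemma Fmat_neg_transpose : Fmat (-Bᵀ) k = (Emat B k)ᵀ := by
  rw [Fmat, Emat, Matrix.transpose_add, Jmat_transpose, colSel_transpose, matPos_transpose,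
    Matrix.transpose_neg]

variable (B w k)

lemma BCG_snoc : BCG B (w ++ [k]) = BCGstep B (BCG B w) k := by
  simp [BCG]

lemma Bmat_snoc : Bmat B (w ++ [k]) = mutB (Bmat B w) k := by
  simp [Bmat, BCG_snoc, BCGstep]

lemma Cmat_snoc :
    Cmat B (w ++ [k]) = Cmat B w * (Jmat n k + rowSel (matPos (Bmat B w)) k)
      + colSel (matPos (-Cmat B w)) k * Bmat B w := by
  simp [Bmat, Cmat, BCG_snoc, BCGstep]

lemma Gmat_snoc :
    Gmat B (w ++ [k]) = Gmat B w * (Jmat n k + colSel (matPos (-Bmat B w)) k)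
      - B * colSel (matPos (-Cmat B w)) k := by
  simp [Bmat, Cmat, Gmat, BCG_snoc, BCGstep]

lemma Bmat_neg_transpose : Bmat (-Bᵀ) w = -(Bmat B w)ᵀ := by
  induction w using List.reverseRecOn with
  | nil => rfl
  | append_singleton w k ih => rw [Bmat_snoc, Bmat_snoc, ih, mutB_neg_transpose]

variable {B w k}

lemma Cmat_snoc_of_colHasSign (h : ColHasSign (Cmat B w) k ε) :
    Cmat B (w ++ [k]) = Cmat B w * Fmat (ε • Bmat B w) k := by
  rcases h with ⟨-, ⟨rfl, h⟩ | ⟨rfl, h⟩⟩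
  · rw [Cmat_snoc, colSel_matPos_neg_of_nonneg _ _ h, zero_mul, add_zero, one_smul, Fmat]
  · rw [Cmat_snoc, colSel_matPos_neg_of_nonpos _ _ h, neg_mul, colSel_mul, neg_one_smul, Fmat,
      ← rowSel_matPos_neg_add]
    noncomm_ring

lemma Gmat_snoc_of_colHasSign (h : ColHasSign (Cmat B w) k ε)
    (hBC : B * Cmat B w = Gmat B w * Bmat B w) :
    Gmat B (w ++ [k]) = Gmat B w * Emat (ε • Bmat B w) k := by
  rcases h with ⟨-, ⟨rfl, h⟩ | ⟨rfl, h⟩⟩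
  · rw [Gmat_snoc, colSel_matPos_neg_of_nonneg _ _ h, mul_zero, sub_zero, one_smul, Emat]
  · rw [Gmat_snoc, colSel_matPos_neg_of_nonpos _ _ h, neg_one_smul, Emat, neg_neg,
      ← colSel_matPos_neg_add (Bmat B w), mul_neg, sub_neg_eq_add, mul_colSel, hBC, ← mul_colSel]
    noncomm_ring

theorem mul_Cmat_eq_Gmat_mul_Bmat (hB : TotSSS B) (hC : ∀ w k, ColSignCoherent (Cmat B w) k)
    (w : List (Fin n)) : B * Cmat B w = Gmat B w * Bmat B w := by
  induction w using List.reverseRecOn with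
  | nil => simp [Bmat, Cmat, Gmat, BCG]
  | append_singleton w k ih =>
    obtain ⟨ε, hε⟩ := hC w k
    rw [Cmat_snoc_of_colHasSign hε, Gmat_snoc_of_colHasSign hε ih, Bmat_snoc, ← mul_assoc, ih,
      mul_assoc, mul_assoc, Emat_smul_mul_mutB ((hB w).apply_self k) hε.eq_one_or_eq_neg_one]

theorem Gmat_transpose_mul_Cmat_neg_transpose (hB : TotSSS B)
    (hC : ∀ w k, ∃ ε, ColHasSign (Cmat B w) k ε ∧ ColHasSign (Cmat (-Bᵀ) w) k ε)
    (w : List (Fin n)) : (Gmat B w)ᵀ * Cmat (-Bᵀ) w = 1 := by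
  induction w using List.reverseRecOn with
  | nil => simp [Cmat, Gmat, BCG]
  | append_singleton w k ih =>
    obtain ⟨ε, hε, hε'⟩ := hC w k
    have hBC := mul_Cmat_eq_Gmat_mul_Bmat hB (fun w k => (hC w k).imp fun _ h => h.1) w
    have hkk : (ε • Bmat B w) k k = 0 := by simp [(hB w).apply_self k]
    rw [Gmat_snoc_of_colHasSign hε hBC, Cmat_snoc_of_colHasSign hε', Bmat_neg_transpose,
      show ε • -(Bmat B w)ᵀ = -(ε • Bmat B w)ᵀ by rw [Matrix.transpose_smul, smul_neg],
      Fmat_neg_transpose, Matrix.transpose_mul, mul_assoc, ← mul_assoc (Gmat B w)ᵀ, ih, one_mul,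
      ← Matrix.transpose_mul, Emat_mul_self hkk, Matrix.transpose_one]

end Recursion

section Orthogonality

variable {ι : Type*} [Fintype ι]

lemma eq_zero_of_sum_mul_eq_zero {c g : ι → ℤ} (hc : (∀ m, 0 ≤ c m) ∨ ∀ m, c m ≤ 0)
    (hg : ∀ m, 0 ≤ g m) (hsum : ∑ m, c m * g m = 0) {l : ι} (hl : g l ≠ 0) : c l = 0 := by
  have hcg : c l * g l = 0 := by
    rcases hc with hc | hc
    · exact (Finset.sum_eq_zero_iff_of_nonneg fun m _ => mul_nonneg (hc m) (hg m)).mp hsum l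
        (Finset.mem_univ l)
    · exact (Finset.sum_eq_zero_iff_of_nonpos fun m _ => mul_nonpos_of_nonpos_of_nonneg (hc m)
        (hg m)).mp hsum l (Finset.mem_univ l)
  exact (mul_eq_zero.mp hcg).resolve_right hl

variable [DecidableEq ι]

theorem col_eq_single_of_transpose_mul_eq_one {G C : Matrix ι ι ℤ} (hCG : Cᵀ * G = 1)
    (hC : ∀ j, (∀ m, 0 ≤ C m j) ∨ ∀ m, C m j ≤ 0) {i : ι} (hG : ∀ l, 0 ≤ G l i) :
    ∃ j, ∀ l, G l i = if l = j then 1 else 0 := by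
  have hrow : ∀ l, G l i ≠ 0 → ∀ p ≠ i, C l p = 0 := fun l hl p hp =>
    eq_zero_of_sum_mul_eq_zero (hC p) hG
      (by simpa [Matrix.mul_apply, Matrix.one_apply, hp] using congrFun (congrFun hCG p) i) hl
  have hprod : ∀ l m, G m i ≠ 0 → G l i * C m i = if l = m then 1 else 0 := by
    intro l m hm
    rw [← Matrix.one_apply, ← mul_eq_one_comm.mp hCG, Matrix.mul_apply,
      Finset.sum_eq_single i (fun p _ hp => by simp [hrow m hm p hp]) (by simp)]
    rfl
  obtain ⟨l₀, hl₀⟩ : ∃ l, G l i ≠ 0 := by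
    by_contra! h
    simpa [Matrix.mul_apply, h] using congrFun (congrFun hCG i) i
  have hone : G l₀ i = 1 := Int.eq_one_of_mul_eq_one_right (hG l₀) (by simpa using hprod l₀ l₀ hl₀)
  refine ⟨l₀, fun l => ?_⟩
  split_ifs with hl
  · rw [hl, hone]
  · by_contra hne
    have hoff := hprod l₀ l hne
    rw [hone, one_mul, if_neg (Ne.symm hl)] at hoff
    simpa [hoff] using hprod l l hne

end Orthogonality

/-- under the Assumption, a `g`-vector (column of a `G`-matrix) with
all entries nonnegative is a standard basis vector. -/
theorem nonneg_g_vector_is_std {n : ℕ} (B : Matrix (Fin n) (Fin n) ℤ) (hB : TotSSS B)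
    (hA : TheAssumption B) (w : List (Fin n)) (i : Fin n)
    (h : ∀ l, 0 ≤ Gmat B w l i) :
    ∃ j, ∀ l, Gmat B w l i = if l = j then 1 else 0 := by
  have hC := hA B (Or.inl ⟨[], rfl⟩)
  have hCG : (Cmat (-Bᵀ) w)ᵀ * Gmat B w = 1 := by
    rw [← Matrix.transpose_transpose (Gmat B w), ← Matrix.transpose_mul,
      Gmat_transpose_mul_Cmat_neg_transpose hB hC w, Matrix.transpose_one]
  exact col_eq_single_of_transpose_mul_eq_one hCG
    (fun j => (hC w j).elim fun _ hj => hj.2.nonneg_or_nonpos) h
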